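/- Let n, m be coprime integers with 1 < n < m, r ≥ 1, and let Γ ⊆ (ℕ ∪ {∞})^r be the tropical semiring generated by v_1 = (n,…,n), v_2 = (m,…,m), and w_1, …, w_r, where (w_i)_i = ∞ and (w_i)_j = nm for j ≠ i. Then for k ∈ ℕ, the diagonal element k̄ = (k,…,k) belongs to Γ if and only if k belongs to the numerical semigroup ⟨n,m⟩ = { an + bm : a, b ∈ ℕ }. -/

import Mathlib

/-!
Every generator has each coordinate in `⟨n,m⟩ ∪ {∞}` (note `nm ∈ ⟨n,m⟩`), and the vectors with this
property are closed under componentwise addition and minimum, so every element of `Γ` has them too;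
reading off one (finite) coordinate of `k̄` gives `k ∈ ⟨n,m⟩`. Conversely `v ↦ v̄` is additive, so the
diagonals of `Γ` form a submonoid of `ℕ` containing `n` and `m`.
-/

/-- The tropical sub-semiring of `(ℕ∪{∞})^r` generated by a set `G`:
the smallest subset containing `0` and `G`, closed under componentwise
addition and componentwise minimum. -/
def tropGen {r : ℕ} (G : Set (Fin r → ℕ∞)) : Set (Fin r → ℕ∞) :=
  ⋂₀ {S : Set (Fin r → ℕ∞) | 0 ∈ S ∧ G ⊆ S ∧
      (∀ a ∈ S, ∀ b ∈ S, a + b ∈ S) ∧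
      (∀ a ∈ S, ∀ b ∈ S, (fun i => min (a i) (b i)) ∈ S)}

/-- Generators of the value semiring of a plane curve with `r` branches,
each with semigroup `⟨n,m⟩` and pairwise intersection multiplicities `nm`:
`v₁ = (n,…,n)`, `v₂ = (m,…,m)`, and `w_i` with `(w_i)_i = ∞`, `(w_i)_j = nm`. -/
def genNM (n m r : ℕ) : Set (Fin r → ℕ∞) :=
  {fun _ => (n : ℕ∞)} ∪ {fun _ => (m : ℕ∞)} ∪
    Set.range (fun i : Fin r => fun j : Fin r =>
      if j = i then (⊤ : ℕ∞) else ((n * m : ℕ) : ℕ∞))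

section TropGen

variable {r : ℕ} {G : Set (Fin r → ℕ∞)}

lemma subset_tropGen : G ⊆ tropGen G :=
  fun _ hx _ hS => hS.2.1 hx

lemma tropGen_subset_of {S : Set (Fin r → ℕ∞)} (hzero : 0 ∈ S) (hG : G ⊆ S)
    (hadd : ∀ a ∈ S, ∀ b ∈ S, a + b ∈ S)
    (hmin : ∀ a ∈ S, ∀ b ∈ S, (fun i => min (a i) (b i)) ∈ S) : tropGen G ⊆ S :=
  Set.sInter_subset_of_mem ⟨hzero, hG, hadd, hmin⟩

variable (G) in
def tropGenAddSubmonoid : AddSubmonoid (Fin r → ℕ∞) where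
  carrier := tropGen G
  zero_mem' := fun _ hS => hS.1
  add_mem' := fun ha hb S hS => hS.2.2.1 _ (ha S hS) _ (hb S hS)

end TropGen

def coordsInWithTop (r : ℕ) (M : AddSubmonoid ℕ) : Set (Fin r → ℕ∞) :=
  {v | ∀ i, v i = ⊤ ∨ ∃ x ∈ M, v i = x}

section CoordsInWithTop

variable {r : ℕ} {M : AddSubmonoid ℕ}

lemma zero_mem_coordsInWithTop : 0 ∈ coordsInWithTop r M :=
  fun _ => .inr ⟨0, M.zero_mem, rfl⟩

lemma add_mem_coordsInWithTop {a b : Fin r → ℕ∞} (ha : a ∈ coordsInWithTop r M)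
    (hb : b ∈ coordsInWithTop r M) : a + b ∈ coordsInWithTop r M := by
  intro i
  rcases ha i with ha' | ⟨x, hx, ha'⟩
  · exact .inl (by simp [ha'])
  rcases hb i with hb' | ⟨y, hy, hb'⟩
  · exact .inl (by simp [hb'])
  exact .inr ⟨x + y, M.add_mem hx hy, by simp [ha', hb']⟩

lemma min_mem_coordsInWithTop {a b : Fin r → ℕ∞} (ha : a ∈ coordsInWithTop r M)
    (hb : b ∈ coordsInWithTop r M) : (fun i => min (a i) (b i)) ∈ coordsInWithTop r M := by
  intro i
  dsimp only
  rcases min_choice (a i) (b i) with h | h <;> rw [h]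
  exacts [ha i, hb i]

lemma tropGen_subset_coordsInWithTop {G : Set (Fin r → ℕ∞)} (hG : G ⊆ coordsInWithTop r M) :
    tropGen G ⊆ coordsInWithTop r M :=
  tropGen_subset_of zero_mem_coordsInWithTop hG (fun _ ha _ hb => add_mem_coordsInWithTop ha hb)
    (fun _ ha _ hb => min_mem_coordsInWithTop ha hb)

end CoordsInWithTop

lemma mem_closure_pair_nat_iff {n m k : ℕ} :
    k ∈ AddSubmonoid.closure ({n, m} : Set ℕ) ↔ ∃ a b : ℕ, k = a * n + b * m := by
  simp only [AddSubmonoid.mem_closure_pair, smul_eq_mul, eq_comm]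

lemma genNM_subset_coordsInWithTop (n m r : ℕ) :
    genNM n m r ⊆ coordsInWithTop r (AddSubmonoid.closure {n, m}) := by
  have hn : n ∈ AddSubmonoid.closure ({n, m} : Set ℕ) := AddSubmonoid.subset_closure (by simp)
  have hm : m ∈ AddSubmonoid.closure ({n, m} : Set ℕ) := AddSubmonoid.subset_closure (by simp)
  rintro v ((rfl | rfl) | ⟨i, rfl⟩) j
  · exact .inr ⟨n, hn, rfl⟩
  · exact .inr ⟨m, hm, rfl⟩
  · by_cases hji : j = i
    · exact .inl (if_pos hji)
    · exact .inr ⟨n * m, mul_comm n m ▸ AddSubmonoid.nsmul_mem _ hn m, if_neg hji⟩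

lemma const_mem_tropGen_genNM {n m r k : ℕ} (hk : k ∈ AddSubmonoid.closure ({n, m} : Set ℕ)) :
    (fun _ : Fin r => (k : ℕ∞)) ∈ tropGen (genNM n m r) := by
  let diagonal : ℕ →+ Fin r → ℕ∞ := (Pi.constAddMonoidHom (Fin r) ℕ∞).comp (Nat.castAddMonoidHom ℕ∞)
  suffices AddSubmonoid.closure {n, m} ≤ (tropGenAddSubmonoid (genNM n m r)).comap diagonal from
    this hk
  rw [AddSubmonoid.closure_le, Set.insert_subset_iff, Set.singleton_subset_iff]
  exact ⟨subset_tropGen (.inl (.inl rfl)), subset_tropGen (.inl (.inr rfl))⟩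

theorem diagonal_mem_iff_nm_general (n m r : ℕ) (hr : 1 ≤ r) (k : ℕ) :
    ((fun _ : Fin r => (k : ℕ∞)) ∈ tropGen (genNM n m r)) ↔
      ∃ a b : ℕ, k = a * n + b * m := by
  rw [← mem_closure_pair_nat_iff]
  refine ⟨fun h => ?_, const_mem_tropGen_genNM⟩
  obtain htop | ⟨x, hx, hkx⟩ :=
    tropGen_subset_coordsInWithTop (genNM_subset_coordsInWithTop n m r) h ⟨0, hr⟩
  · exact absurd htop (ENat.natCast_ne_top k)
  · rwa [Nat.cast_inj.mp hkx]

/-- The diagonal element `k̄ = (k,…,k)` belongs to the value semiring iff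
`k` belongs to the numerical semigroup `⟨n,m⟩`. -/
theorem diagonal_mem_iff_nm (n m r : ℕ) (hn : 1 < n) (hnm : n < m)
    (hcop : Nat.Coprime n m) (hr : 1 ≤ r) (k : ℕ) :
    ((fun _ : Fin r => (k : ℕ∞)) ∈ tropGen (genNM n m r)) ↔
      ∃ a b : ℕ, k = a * n + b * m :=
  diagonal_mem_iff_nm_general n m r hr k
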